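/- Assume r0 : [0,π] → ℝ satisfies (H2). Then for any reals 0 ≤ α < β ≤ 1 there exists a constant C > 0 such that for every integer n ≥ 1 and all φ ≠ ϕ in (0,π): |H_n(φ,ϕ)| ≤ C · n^{−α} · sin ϕ · r0(ϕ)^{1/2} · r0(φ)^{−3/2} · |φ − ϕ|^{−β}. -/

import Mathlib

/-!
Euler's integral bounds `F_n(x) · B(n+½, n+½)` by `∫₀¹ (1 - x t)^{-n-½} (t(1-t))^{n-½} dt`
(compare partial sums with the binomial series of `(1 - x t)^{-n-½}`). With `x = 1 - s²` the
integrand is at most `(1+s)^{-n} s^{-a} t^{-½} (1-t)^{a/2-1}` for `0 < a ≤ 1`, a Beta integrand,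
and the constant in front of `H_n` equals `4ⁿ B(n+½, n+½) / (2π)`. Since `x = 4 r0(φ) r0(ϕ) / R`, this gives
`|H_n| ≲ sin ϕ · (r0(ϕ)/r0(φ)) · R^{-½} (1-s)ⁿ s^{-a}`. Then `(1-s)ⁿ ≤ (n s)^{-α}` trades the
decay in `n` for the power `s^{-α}` (take `a = β - α`), and
`s² R = (r0 φ - r0 ϕ)² + (cos φ - cos ϕ)² ≥ 4 r0(φ) r0(ϕ) (φ - ϕ)² / (π C0)²` by (H2) and
Jordan's inequality.
-/

open Real Set

/-- The Gauss hypergeometric function `F(a,b;c;x) = Σₖ (a)ₖ(b)ₖ/((c)ₖ k!) xᵏ`. -/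
noncomputable def hyp (a b c x : ℝ) : ℝ :=
  ∑' k : ℕ, ((ascPochhammer ℝ k).eval a * (ascPochhammer ℝ k).eval b /
    ((ascPochhammer ℝ k).eval c * (Nat.factorial k : ℝ))) * x ^ k

/-- `R(φ,ϕ) = (r0(φ)+r0(ϕ))² + (cos φ − cos ϕ)²`. -/
noncomputable def Rker (r0 : ℝ → ℝ) (φ ϕ : ℝ) : ℝ :=
  (r0 φ + r0 ϕ) ^ 2 + (Real.cos φ - Real.cos ϕ) ^ 2

/-- `H_n(φ,ϕ) = (2^{2n−1}((1/2)ₙ)²/(2n)!) sin ϕ · r0(φ)^{n−1} r0(ϕ)^{n+1} R(φ,ϕ)^{−(n+1/2)}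
· F(n+1/2,n+1/2;2n+1; 4 r0(φ) r0(ϕ)/R(φ,ϕ))`. -/
noncomputable def Hker (r0 : ℝ → ℝ) (n : ℕ) (φ ϕ : ℝ) : ℝ :=
  (2:ℝ) ^ (2 * n - 1) * ((ascPochhammer ℝ n).eval (1 / 2 : ℝ)) ^ 2 / (Nat.factorial (2 * n) : ℝ) *
    (Real.sin ϕ * r0 φ ^ (n - 1) * r0 ϕ ^ (n + 1) / Rker r0 φ ϕ ^ ((n : ℝ) + 1 / 2)) *
    hyp ((n : ℝ) + 1 / 2) ((n : ℝ) + 1 / 2) (2 * (n : ℝ) + 1) (4 * r0 φ * r0 ϕ / Rker r0 φ ϕ)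

open ProbabilityTheory MeasureTheory

theorem hasSum_ascPochhammer_div_factorial_mul_pow (a : ℝ) {u : ℝ} (hu : |u| < 1) :
    HasSum (fun k : ℕ => (ascPochhammer ℝ k).eval a / k.factorial * u ^ k) ((1 - u) ^ (-a)) := by
  have h := (one_div_one_sub_rpow_hasFPowerSeriesOnBall_zero a).hasSum (y := u)
    (by simpa [Metric.mem_eball, edist_zero_right, enorm_eq_nnnorm, ← NNReal.coe_lt_coe] using hu)
  simp only [zero_add, FormalMultilinearSeries.ofScalars_apply_eq, smul_eq_mul] at h
  have hchoose (k : ℕ) : Ring.choose (a + k - 1) k = (ascPochhammer ℝ k).eval a / k.factorial := by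
    rw [← Ring.multichoose_eq, eq_div_iff (Nat.cast_ne_zero.2 k.factorial_ne_zero), mul_comm,
      ← nsmul_eq_mul, Ring.factorial_nsmul_multichoose_eq_ascPochhammer,
      Polynomial.ascPochhammer_smeval_eq_eval]
  rw [rpow_neg (by linarith [abs_lt.1 hu]), ← one_div]
  simpa only [hchoose] using h

theorem Gamma_add_nat_eq_ascPochhammer_mul_Gamma {a : ℝ} (ha : 0 < a) (k : ℕ) :
    Gamma (a + k) = (ascPochhammer ℝ k).eval a * Gamma a := by
  induction k with
  | zero => simp
  | succ k ih =>
    rw [Nat.cast_succ, ← add_assoc, Gamma_add_one (by positivity), ih, ascPochhammer_succ_eval]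
    ring

theorem beta_add_nat_mul_ascPochhammer {a b : ℝ} (ha : 0 < a) (hb : 0 < b) (k : ℕ) :
    beta (a + k) b * (ascPochhammer ℝ k).eval (a + b) = beta a b * (ascPochhammer ℝ k).eval a := by
  have hab := (Gamma_pos_of_pos (add_pos ha hb)).ne'
  have hpoch := (ascPochhammer_pos k (a + b) (by positivity)).ne'
  rw [beta, beta, add_right_comm, Gamma_add_nat_eq_ascPochhammer_mul_Gamma ha,
    Gamma_add_nat_eq_ascPochhammer_mul_Gamma (add_pos ha hb)]
  field_simp

theorem integral_rpow_mul_one_sub_rpow {a b : ℝ} (ha : 0 < a) (hb : 0 < b) :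
    ∫ t in (0:ℝ)..1, t ^ (a - 1) * (1 - t) ^ (b - 1) = beta a b := by
  have hofReal : Complex.betaIntegral a b =
      ((∫ t in (0:ℝ)..1, t ^ (a - 1) * (1 - t) ^ (b - 1) : ℝ) : ℂ) := by
    rw [Complex.betaIntegral, ← intervalIntegral.integral_ofReal]
    refine intervalIntegral.integral_congr fun t ht => ?_
    rw [uIcc_of_le zero_le_one] at ht
    simp only [Complex.ofReal_mul, Complex.ofReal_cpow ht.1, Complex.ofReal_sub,
      Complex.ofReal_cpow (sub_nonneg.2 ht.2), Complex.ofReal_one]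
  rw [beta_eq_betaIntegralReal a b ha hb, hofReal, Complex.ofReal_re]

theorem intervalIntegrable_rpow_mul_one_sub_rpow {a b : ℝ} (ha : 0 < a) (hb : 0 < b) :
    IntervalIntegrable (fun t => t ^ (a - 1) * (1 - t) ^ (b - 1)) volume 0 1 :=
  intervalIntegral.intervalIntegrable_of_integral_ne_zero
    ((integral_rpow_mul_one_sub_rpow ha hb).trans_ne (beta_pos ha hb).ne')

theorem hyp_mul_beta_le {ν x : ℝ} (hν : 0 < ν) (hx0 : 0 ≤ x) (hx1 : x < 1) {g : ℝ → ℝ}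
    (hg : IntervalIntegrable g volume 0 1)
    (hle : ∀ t ∈ Ioo (0:ℝ) 1, (1 - x * t) ^ (-ν) * (t * (1 - t)) ^ (ν - 1) ≤ g t) :
    hyp ν ν (2 * ν) x * beta ν ν ≤ ∫ t in (0:ℝ)..1, g t := by
  set c : ℕ → ℝ := fun k => (ascPochhammer ℝ k).eval ν / k.factorial * x ^ k
  set f : ℕ → ℝ → ℝ := fun k t => t ^ (ν + k - 1) * (1 - t) ^ (ν - 1)
  have hterm (k : ℕ) : (ascPochhammer ℝ k).eval ν * (ascPochhammer ℝ k).eval ν /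
      ((ascPochhammer ℝ k).eval (2 * ν) * k.factorial) * x ^ k * beta ν ν =
      c k * ∫ t in (0:ℝ)..1, f k t := by
    have hbeta := beta_add_nat_mul_ascPochhammer hν hν k
    rw [← two_mul] at hbeta
    have hpoch := (ascPochhammer_pos k (2 * ν) (by positivity)).ne'
    rw [integral_rpow_mul_one_sub_rpow (by positivity) hν, eq_div_of_mul_eq hpoch hbeta]
    simp only [c]
    field_simp
  rw [hyp, ← tsum_mul_right]
  refine Real.tsum_le_of_sum_range_le (fun k => ?_) fun N => ?_
  · have := ascPochhammer_pos k ν hν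
    have := ascPochhammer_pos k (2 * ν) (by positivity)
    exact mul_nonneg (by positivity) (beta_pos hν hν).le
  have hf (k : ℕ) : IntervalIntegrable (f k) volume 0 1 :=
    intervalIntegrable_rpow_mul_one_sub_rpow (by positivity) hν
  simp_rw [hterm, ← intervalIntegral.integral_const_mul]
  rw [← intervalIntegral.integral_finsetSum fun k _ => (hf k).const_mul (c k)]
  refine intervalIntegral.integral_mono_on_of_le_Ioo zero_le_one
    (by simpa only [Finset.sum_fn] using
      IntervalIntegrable.sum (Finset.range N) fun k _ => (hf k).const_mul (c k)) hg fun t ht => ?_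
  have hxt : |x * t| < 1 := by
    rw [abs_of_nonneg (mul_nonneg hx0 ht.1.le)]
    nlinarith [ht.1, ht.2]
  have hsum : ∑ k ∈ Finset.range N, c k * f k t =
      (∑ k ∈ Finset.range N, (ascPochhammer ℝ k).eval ν / k.factorial * (x * t) ^ k) *
        (t * (1 - t)) ^ (ν - 1) := by
    rw [Finset.sum_mul]
    refine Finset.sum_congr rfl fun k _ => ?_
    simp only [c, f]
    rw [add_sub_right_comm, rpow_add ht.1, rpow_natCast, mul_rpow ht.1.le (by linarith [ht.2])]
    ring
  rw [hsum]
  refine le_trans (mul_le_mul_of_nonneg_right ?_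
    (rpow_nonneg (mul_nonneg ht.1.le (sub_nonneg.2 ht.2.le)) _)) (hle t ht)
  refine sum_le_hasSum _ (fun k _ => ?_) (hasSum_ascPochhammer_div_factorial_mul_pow ν hxt)
  have := ascPochhammer_pos k ν hν
  have := ht.1
  positivity

theorem one_add_mul_mul_one_sub_le {s t : ℝ} (hs : 0 ≤ s) (ht0 : 0 ≤ t) (ht1 : t ≤ 1) :
    (1 + s) * (t * (1 - t)) ≤ 1 - (1 - s ^ 2) * t := by
  nlinarith [sq_nonneg (1 - (1 + s) * t), mul_nonneg (mul_nonneg hs (by linarith : 0 ≤ 1 + s))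
    (mul_nonneg ht0 (sub_nonneg.2 ht1))]

theorem rpow_mul_one_sub_rpow_le_sqrt {s t a : ℝ} (hs0 : 0 < s) (hs1 : s ≤ 1) (ht0 : 0 ≤ t)
    (ht1 : t ≤ 1) (ha0 : 0 ≤ a) (ha1 : a ≤ 1) :
    s ^ a * (1 - t) ^ ((1 - a) / 2) ≤ (1 - (1 - s ^ 2) * t) ^ ((1:ℝ) / 2) := by
  set w := 1 - (1 - s ^ 2) * t
  have hs2 : 0 ≤ 1 - s ^ 2 := by nlinarith
  have hsw : s ^ 2 ≤ w := by nlinarith [mul_nonneg hs2 (sub_nonneg.2 ht1)]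
  have htw : 1 - t ≤ w := by nlinarith [mul_nonneg (sq_nonneg s) ht0]
  have hw0 : 0 < w := by nlinarith
  calc s ^ a * (1 - t) ^ ((1 - a) / 2) = (s ^ 2) ^ (a / 2) * (1 - t) ^ ((1 - a) / 2) := by
        rw [← rpow_natCast, ← rpow_mul hs0.le]; ring_nf
    _ ≤ w ^ (a / 2) * w ^ ((1 - a) / 2) := by
        gcongr
    _ = w ^ ((1:ℝ) / 2) := by rw [← rpow_add hw0]; ring_nf

theorem one_sub_mul_rpow_mul_rpow_le {n : ℕ} {s a t : ℝ} (hs0 : 0 < s) (hs1 : s ≤ 1)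
    (ha0 : 0 ≤ a) (ha1 : a ≤ 1) (ht : t ∈ Ioo (0:ℝ) 1) :
    (1 - (1 - s ^ 2) * t) ^ (-((n:ℝ) + 1 / 2)) * (t * (1 - t)) ^ ((n:ℝ) + 1 / 2 - 1) ≤
      s ^ (-a) / (1 + s) ^ n * (t ^ ((1:ℝ) / 2 - 1) * (1 - t) ^ (a / 2 - 1)) := by
  obtain ⟨ht0, ht1⟩ := ht
  have ht1' : 0 < 1 - t := sub_pos.2 ht1
  set w := 1 - (1 - s ^ 2) * t
  have hw : 0 < w := by nlinarith [mul_nonneg (sq_nonneg s) ht0.le]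
  have hbase : t * (1 - t) / w ≤ 1 / (1 + s) := by
    rw [div_le_div_iff₀ hw (by positivity), one_mul, mul_comm]
    exact one_add_mul_mul_one_sub_le hs0.le ht0.le ht1.le
  have hsqrt : (w ^ ((1:ℝ) / 2))⁻¹ ≤ s ^ (-a) * (1 - t) ^ ((a - 1) / 2) := by
    have h := rpow_mul_one_sub_rpow_le_sqrt hs0 hs1 ht0.le ht1.le ha0 ha1
    rw [rpow_neg hs0.le, show (a - 1) / 2 = -((1 - a) / 2) by ring, rpow_neg ht1'.le,
      ← mul_inv]
    exact inv_anti₀ (by positivity) h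
  calc (w ^ (-((n:ℝ) + 1 / 2)) * (t * (1 - t)) ^ ((n:ℝ) + 1 / 2 - 1))
      = (t * (1 - t) / w) ^ n * (t ^ (-(1:ℝ) / 2) * (1 - t) ^ (-(1:ℝ) / 2)) *
          (w ^ ((1:ℝ) / 2))⁻¹ := by
        rw [neg_add, rpow_add hw, rpow_neg hw.le, rpow_natCast, rpow_neg hw.le,
          show (n:ℝ) + 1 / 2 - 1 = n + (-(1:ℝ) / 2) by ring, rpow_add (by positivity),
          rpow_natCast, mul_rpow ht0.le ht1'.le, div_pow]
        ring
    _ ≤ (1 / (1 + s)) ^ n * (t ^ (-(1:ℝ) / 2) * (1 - t) ^ (-(1:ℝ) / 2)) *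
          (s ^ (-a) * (1 - t) ^ ((a - 1) / 2)) := by
        gcongr
    _ = s ^ (-a) / (1 + s) ^ n * (t ^ ((1:ℝ) / 2 - 1) * (1 - t) ^ (a / 2 - 1)) := by
        rw [show a / 2 - 1 = -(1:ℝ) / 2 + (a - 1) / 2 by ring, rpow_add ht1',
          show (1:ℝ) / 2 - 1 = -(1:ℝ) / 2 by norm_num, one_div_pow]
        ring

theorem hyp_mul_beta_le_rpow (n : ℕ) {s a : ℝ} (hs0 : 0 < s) (hs1 : s ≤ 1)
    (ha0 : 0 < a) (ha1 : a ≤ 1) :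
    hyp ((n:ℝ) + 1 / 2) ((n:ℝ) + 1 / 2) (2 * (n:ℝ) + 1) (1 - s ^ 2) *
        beta ((n:ℝ) + 1 / 2) ((n:ℝ) + 1 / 2) ≤
      beta (1 / 2) (a / 2) * s ^ (-a) / (1 + s) ^ n := by
  have hint := (intervalIntegrable_rpow_mul_one_sub_rpow (a := 1 / 2) (b := a / 2) (by norm_num)
    (by positivity)).const_mul (s ^ (-a) / (1 + s) ^ n)
  have h := hyp_mul_beta_le (ν := (n:ℝ) + 1 / 2) (x := 1 - s ^ 2) (by positivity) (by nlinarith)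
    (by nlinarith) hint fun t ht => one_sub_mul_rpow_mul_rpow_le hs0 hs1 ha0.le ha1 ht
  rw [intervalIntegral.integral_const_mul, integral_rpow_mul_one_sub_rpow (by norm_num)
    (by positivity), show 2 * ((n:ℝ) + 1 / 2) = 2 * n + 1 by ring] at h
  exact h.trans_eq (by ring)

theorem Hker_coeff_eq {n : ℕ} (hn : 1 ≤ n) :
    (2:ℝ) ^ (2 * n - 1) * ((ascPochhammer ℝ n).eval (1 / 2 : ℝ)) ^ 2 / ((2 * n).factorial : ℝ) =
      4 ^ n * beta ((n:ℝ) + 1 / 2) ((n:ℝ) + 1 / 2) / (2 * π) := by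
  have hpoch : (ascPochhammer ℝ n).eval (1 / 2 : ℝ) = Gamma (n + 1 / 2) / √π := by
    rw [add_comm, Gamma_add_nat_eq_ascPochhammer_mul_Gamma (by norm_num), Gamma_one_half_eq,
      mul_div_cancel_right₀ _ (by positivity)]
  have hfact : ((2 * n).factorial : ℝ) = Gamma ((n:ℝ) + 1 / 2 + ((n:ℝ) + 1 / 2)) := by
    rw [← Gamma_nat_eq_factorial]
    push_cast
    ring_nf
  have hpow : (2:ℝ) ^ (2 * n - 1) = 4 ^ n / 2 := by
    rw [eq_div_iff two_ne_zero, ← pow_succ, Nat.sub_add_cancel (by omega), pow_mul]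
    norm_num
  rw [hpoch, hfact, hpow, beta, div_pow, sq_sqrt pi_pos.le]
  field_simp

theorem rpow_le_exp {y α : ℝ} (hy : 0 ≤ y) (hα0 : 0 ≤ α) (hα1 : α ≤ 1) : y ^ α ≤ exp y := by
  have hexp := add_one_le_exp y
  rcases le_total y 1 with h | h
  · linarith [rpow_le_one hy h hα0]
  · calc y ^ α ≤ y ^ (1:ℝ) := rpow_le_rpow_of_exponent_le h hα1
      _ ≤ exp y := by rw [rpow_one]; linarith

theorem one_sub_pow_le_mul_rpow_neg {s α : ℝ} (hs0 : 0 < s) (hs1 : s ≤ 1) (hα0 : 0 ≤ α)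
    (hα1 : α ≤ 1) {n : ℕ} (hn : 0 < n) : (1 - s) ^ n ≤ ((n:ℝ) * s) ^ (-α) := by
  have hns : 0 < (n:ℝ) * s := by positivity
  calc (1 - s) ^ n ≤ exp (-s) ^ n := by
        gcongr
        linarith [add_one_le_exp (-s)]
    _ = (exp (n * s))⁻¹ := by rw [← exp_nat_mul, ← exp_neg]; ring_nf
    _ ≤ ((n:ℝ) * s) ^ (-α) := by
        rw [rpow_neg hns.le]
        exact inv_anti₀ (by positivity) (rpow_le_exp hns.le hα0 hα1)

theorem four_mul_sin_mul_sin_mul_sq_le_cos_sub_cos_sq {φ ϕ : ℝ} (h : |φ - ϕ| ≤ π) :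
    4 * (sin φ * sin ϕ) * ((φ - ϕ) / π) ^ 2 ≤ (cos φ - cos ϕ) ^ 2 := by
  set σ := (φ + ϕ) / 2
  set δ := (φ - ϕ) / 2
  have hprod : sin φ * sin ϕ = sin σ ^ 2 - sin δ ^ 2 := by
    rw [show φ = σ + δ by ring, show ϕ = σ - δ by ring, sin_add, sin_sub]
    nlinarith [sin_sq_add_cos_sq σ, sin_sq_add_cos_sq δ]
  have hjordan : ((φ - ϕ) / π) ^ 2 ≤ sin δ ^ 2 := by
    have hδ : |δ| ≤ π / 2 := by rw [abs_div, abs_two]; linarith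
    have h := mul_le_sin (abs_nonneg δ) hδ
    have hsq : sin |δ| ^ 2 = sin δ ^ 2 := by
      rcases abs_choice δ with h' | h' <;> simp [h']
    rw [← hsq, show (φ - ϕ) / π = 2 / π * δ by ring, ← sq_abs, abs_mul,
      abs_of_pos (by positivity : (0:ℝ) < 2 / π)]
    gcongr
  rw [cos_sub_cos, hprod]
  nlinarith [sq_nonneg (sin δ), sq_nonneg ((φ - ϕ) / π)]

theorem rpow_neg_half_mul_rpow_neg_le {P R L s β : ℝ} (hP : 0 < P) (hPR : P ≤ R) (hL : 0 < L)
    (hs : 0 < s) (hLs : P * L ^ 2 ≤ R * s ^ 2) (hβ0 : 0 ≤ β) (hβ1 : β ≤ 1) :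
    R ^ (-(1 / 2 : ℝ)) * s ^ (-β) ≤ P ^ (-(1 / 2 : ℝ)) * L ^ (-β) := by
  have hR : 0 < R := hP.trans_le hPR
  have hsq (u : ℝ) (hu : 0 < u) : u ^ (2 * β) = (u ^ 2) ^ β := by
    rw [← rpow_natCast, ← rpow_mul hu.le]; norm_num
  have key : P * L ^ (2 * β) ≤ R * s ^ (2 * β) := by
    calc P * L ^ (2 * β) = P ^ (1 - β) * (P * L ^ 2) ^ β := by
          rw [mul_rpow hP.le (by positivity), hsq L hL, ← mul_assoc, ← rpow_add hP,
            sub_add_cancel, rpow_one]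
      _ ≤ R ^ (1 - β) * (R * s ^ 2) ^ β := by gcongr
      _ = R * s ^ (2 * β) := by
          rw [mul_rpow hR.le (by positivity), hsq s hs, ← mul_assoc, ← rpow_add hR,
            sub_add_cancel, rpow_one]
  have hhalf (u v : ℝ) (hu : 0 < u) (hv : 0 < v) :
      u ^ (-(1 / 2 : ℝ)) * v ^ (-β) = (u * v ^ (2 * β)) ^ (-(1 / 2 : ℝ)) := by
    rw [mul_rpow hu.le (by positivity), ← rpow_mul hv.le]
    ring_nf
  rw [hhalf R s hR hs, hhalf P L hP hL]
  exact rpow_le_rpow_of_nonpos (by positivity) key (by norm_num)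

theorem div_mul_mul_rpow_neg_half {x y : ℝ} (hx : 0 < x) (hy : 0 < y) :
    y / x * (x * y) ^ (-(1 / 2 : ℝ)) = y ^ (1 / 2 : ℝ) * x ^ (-(3 / 2) : ℝ) := by
  rw [mul_rpow hx.le hy.le, show -(3 / 2 : ℝ) = -(1 / 2) - 1 by norm_num, rpow_sub_one hx.ne',
    show y ^ (1 / 2 : ℝ) = y * y ^ (-(1 / 2 : ℝ)) by
      rw [← rpow_one_add' hy.le (by norm_num)]; norm_num]
  ring

/-- The `s` with `s ^ 2 = 1 - x` for the argument `x = 4 r0(φ) r0(ϕ) / R(φ,ϕ)` of the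
hypergeometric factor of `Hker`. -/
noncomputable def Sker (r0 : ℝ → ℝ) (φ ϕ : ℝ) : ℝ :=
  √(((r0 φ - r0 ϕ) ^ 2 + (cos φ - cos ϕ) ^ 2) / Rker r0 φ ϕ)

section Kernel

variable {r0 : ℝ → ℝ} {φ ϕ : ℝ}

theorem Rker_eq :
    Rker r0 φ ϕ = 4 * (r0 φ * r0 ϕ) + ((r0 φ - r0 ϕ) ^ 2 + (cos φ - cos ϕ) ^ 2) := by
  rw [Rker]; ring

theorem Rker_pos (hr : 0 < r0 φ * r0 ϕ) : 0 < Rker r0 φ ϕ := by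
  rw [Rker_eq]; positivity

theorem Sker_sq_mul_Rker (hr : 0 < r0 φ * r0 ϕ) :
    Sker r0 φ ϕ ^ 2 * Rker r0 φ ϕ = (r0 φ - r0 ϕ) ^ 2 + (cos φ - cos ϕ) ^ 2 := by
  rw [Sker, sq_sqrt (by have := Rker_pos hr; positivity), div_mul_cancel₀ _ (Rker_pos hr).ne']

theorem Sker_pos (hr : 0 < r0 φ * r0 ϕ) (hcos : cos φ ≠ cos ϕ) : 0 < Sker r0 φ ϕ := by
  have := sq_pos_of_ne_zero (sub_ne_zero.2 hcos)
  have := Rker_pos hr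
  exact sqrt_pos.2 (by positivity)

theorem Sker_le_one (hr : 0 ≤ r0 φ * r0 ϕ) : Sker r0 φ ϕ ≤ 1 := by
  refine sqrt_le_one.2 (div_le_one_of_le₀ ?_ (by rw [Rker]; positivity))
  rw [Rker_eq]
  linarith

theorem one_sub_Sker_sq (hr : 0 < r0 φ * r0 ϕ) :
    1 - Sker r0 φ ϕ ^ 2 = 4 * r0 φ * r0 ϕ / Rker r0 φ ϕ := by
  rw [eq_div_iff (Rker_pos hr).ne', sub_mul, Sker_sq_mul_Rker hr, Rker_eq]
  ring

theorem mul_sq_le_Rker_mul_Sker_sq {C0 : ℝ} (hC0 : 0 < C0) (hφ : φ ∈ Ioo 0 π)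
    (hϕ : ϕ ∈ Ioo 0 π) (hrφ : 0 < r0 φ) (hrϕ : 0 < r0 ϕ) (hupφ : r0 φ ≤ C0 * sin φ)
    (hupϕ : r0 ϕ ≤ C0 * sin ϕ) :
    r0 φ * r0 ϕ * (|φ - ϕ| / (π * C0 / 2)) ^ 2 ≤ Rker r0 φ ϕ * Sker r0 φ ϕ ^ 2 := by
  have hgeo := four_mul_sin_mul_sin_mul_sq_le_cos_sub_cos_sq (φ := φ) (ϕ := ϕ)
    (abs_le.2 ⟨by linarith [hφ.1, hϕ.2], by linarith [hφ.2, hϕ.1]⟩)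
  have hsinφ := sin_pos_of_pos_of_lt_pi hφ.1 hφ.2
  have hrsin : r0 φ * r0 ϕ ≤ C0 ^ 2 * (sin φ * sin ϕ) := by
    nlinarith [mul_le_mul hupφ hupϕ hrϕ.le (by positivity)]
  rw [mul_comm (Rker _ _ _), Sker_sq_mul_Rker (mul_pos hrφ hrϕ)]
  calc r0 φ * r0 ϕ * (|φ - ϕ| / (π * C0 / 2)) ^ 2
      ≤ C0 ^ 2 * (sin φ * sin ϕ) * (|φ - ϕ| / (π * C0 / 2)) ^ 2 := by gcongr
    _ = 4 * (sin φ * sin ϕ) * ((φ - ϕ) / π) ^ 2 := by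
      rw [div_pow, sq_abs]
      field_simp
      ring
    _ ≤ _ := by nlinarith [sq_nonneg (r0 φ - r0 ϕ)]

theorem abs_Hker_le {n : ℕ} (hn : 1 ≤ n) (hφ : 0 < r0 φ) (hϕ : 0 < r0 ϕ) (hcos : cos φ ≠ cos ϕ)
    (hsin : 0 ≤ sin ϕ) {a : ℝ} (ha0 : 0 < a) (ha1 : a ≤ 1) :
    |Hker r0 n φ ϕ| ≤ beta (1 / 2) (a / 2) / (2 * π) * sin ϕ * (r0 ϕ / r0 φ) *
      (Rker r0 φ ϕ ^ (-(1 / 2 : ℝ)) * ((1 - Sker r0 φ ϕ) ^ n * Sker r0 φ ϕ ^ (-a))) := by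
  have hr : 0 < r0 φ * r0 ϕ := mul_pos hφ hϕ
  have hR := Rker_pos hr
  have hS0 := Sker_pos hr hcos
  have hS1 := Sker_le_one hr.le (r0 := r0) (φ := φ) (ϕ := ϕ)
  set S := Sker r0 φ ϕ
  set F := hyp ((n:ℝ) + 1 / 2) ((n:ℝ) + 1 / 2) (2 * (n:ℝ) + 1) (1 - S ^ 2)
  have hS2 : 0 ≤ 1 - S ^ 2 := by nlinarith
  have hF : 0 ≤ F := by
    refine tsum_nonneg fun k => ?_
    have := ascPochhammer_pos k ((n:ℝ) + 1 / 2) (by positivity)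
    have := ascPochhammer_pos k (2 * (n:ℝ) + 1) (by positivity)
    positivity
  have hF_eq : hyp ((n:ℝ) + 1 / 2) ((n:ℝ) + 1 / 2) (2 * (n:ℝ) + 1)
      (4 * r0 φ * r0 ϕ / Rker r0 φ ϕ) = F := by
    rw [← one_sub_Sker_sq hr]
  have hHker : Hker r0 n φ ϕ = sin ϕ * (r0 ϕ / r0 φ) * Rker r0 φ ϕ ^ (-(1 / 2 : ℝ)) *
      (1 - S ^ 2) ^ n / (2 * π) * (F * beta ((n:ℝ) + 1 / 2) ((n:ℝ) + 1 / 2)) := by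
    rw [Hker, hF_eq, Hker_coeff_eq hn, one_sub_Sker_sq hr, pow_sub₀ _ hφ.ne' hn, pow_succ,
      rpow_add hR, rpow_natCast, rpow_neg hR.le, div_pow]
    field_simp
    ring
  have hB := beta_pos (α := (n:ℝ) + 1 / 2) (β := (n:ℝ) + 1 / 2) (by positivity) (by positivity)
  rw [abs_of_nonneg (by rw [hHker]; positivity), hHker]
  calc sin ϕ * (r0 ϕ / r0 φ) * Rker r0 φ ϕ ^ (-(1 / 2 : ℝ)) * (1 - S ^ 2) ^ n / (2 * π) *
        (F * beta ((n:ℝ) + 1 / 2) ((n:ℝ) + 1 / 2))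
      ≤ sin ϕ * (r0 ϕ / r0 φ) * Rker r0 φ ϕ ^ (-(1 / 2 : ℝ)) * (1 - S ^ 2) ^ n / (2 * π) *
        (beta (1 / 2) (a / 2) * S ^ (-a) / (1 + S) ^ n) := by
        gcongr
        exact hyp_mul_beta_le_rpow n hS0 hS1 ha0 ha1
    _ = beta (1 / 2) (a / 2) / (2 * π) * sin ϕ * (r0 ϕ / r0 φ) *
      (Rker r0 φ ϕ ^ (-(1 / 2 : ℝ)) * ((1 - S) ^ n * S ^ (-a))) := by
        rw [show 1 - S ^ 2 = (1 - S) * (1 + S) by ring, mul_pow]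
        field_simp

theorem abs_Hker_le_rpow {n : ℕ} (hn : 1 ≤ n) (hφ : 0 < r0 φ) (hϕ : 0 < r0 ϕ)
    (hcos : cos φ ≠ cos ϕ) (hsin : 0 < sin ϕ) {α β L : ℝ} (hα : 0 ≤ α) (hαβ : α < β)
    (hβ : β ≤ 1) (hL : 0 < L) (hLS : r0 φ * r0 ϕ * L ^ 2 ≤ Rker r0 φ ϕ * Sker r0 φ ϕ ^ 2) :
    |Hker r0 n φ ϕ| ≤ beta (1 / 2) ((β - α) / 2) / (2 * π) * (n : ℝ) ^ (-α) * sin ϕ *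
      r0 ϕ ^ (1 / 2 : ℝ) * r0 φ ^ (-(3 / 2) : ℝ) * L ^ (-β) := by
  have hr : 0 < r0 φ * r0 ϕ := mul_pos hφ hϕ
  have hS := Sker_pos hr hcos
  set K := beta (1 / 2) ((β - α) / 2) / (2 * π)
  have hpre : 0 ≤ K * sin ϕ * (r0 ϕ / r0 φ) :=
    mul_nonneg (mul_nonneg (div_nonneg (beta_pos (by norm_num) (by linarith)).le (by positivity))
      hsin.le) (div_pos hϕ hφ).le
  calc |Hker r0 n φ ϕ|
      ≤ K * sin ϕ * (r0 ϕ / r0 φ) *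
          (Rker r0 φ ϕ ^ (-(1 / 2 : ℝ)) * ((1 - Sker r0 φ ϕ) ^ n * Sker r0 φ ϕ ^ (-(β - α)))) :=
        abs_Hker_le hn hφ hϕ hcos hsin.le (by linarith) (by linarith)
    _ ≤ K * sin ϕ * (r0 ϕ / r0 φ) *
          (Rker r0 φ ϕ ^ (-(1 / 2 : ℝ)) *
            (((n:ℝ) * Sker r0 φ ϕ) ^ (-α) * Sker r0 φ ϕ ^ (-(β - α)))) := by
        refine mul_le_mul_of_nonneg_left (mul_le_mul_of_nonneg_left ?_
          (rpow_nonneg (Rker_pos hr).le _)) hpre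
        exact mul_le_mul_of_nonneg_right
          (one_sub_pow_le_mul_rpow_neg hS (Sker_le_one hr.le) hα (by linarith) hn) (by positivity)
    _ = K * sin ϕ * (r0 ϕ / r0 φ) *
          ((n:ℝ) ^ (-α) * (Rker r0 φ ϕ ^ (-(1 / 2 : ℝ)) * Sker r0 φ ϕ ^ (-β))) := by
        rw [mul_rpow (by positivity) hS.le, mul_assoc ((n:ℝ) ^ (-α)), ← rpow_add hS,
          show -α + -(β - α) = -β by ring]
        ring
    _ ≤ K * sin ϕ * (r0 ϕ / r0 φ) *
          ((n:ℝ) ^ (-α) * ((r0 φ * r0 ϕ) ^ (-(1 / 2 : ℝ)) * L ^ (-β))) := by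
        refine mul_le_mul_of_nonneg_left (mul_le_mul_of_nonneg_left ?_ (by positivity)) hpre
        exact rpow_neg_half_mul_rpow_neg_le hr (by rw [Rker_eq]; nlinarith) hL hS hLS
          (by linarith) hβ
    _ = _ := by
        linear_combination (K * sin ϕ * (n:ℝ) ^ (-α) * L ^ (-β)) *
          div_mul_mul_rpow_neg_half hφ hϕ

end Kernel

/-- Assume `r0` satisfies (H2), i.e. `C0⁻¹ sin φ ≤ r0(φ) ≤ C0 sin φ` on `[0,π]`. Then for any
`0 ≤ α < β ≤ 1` there is `C > 0` with
`|H_n(φ,ϕ)| ≤ C n^{−α} sin ϕ · r0(ϕ)^{1/2} r0(φ)^{−3/2} |φ−ϕ|^{−β}` for every `n ≥ 1` and all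
`φ ≠ ϕ` in `(0,π)`. -/
theorem stmt8 (r0 : ℝ → ℝ) (C0 : ℝ) (hC0 : 0 < C0)
    (hH2 : ∀ φ ∈ Set.Icc (0:ℝ) π, C0⁻¹ * Real.sin φ ≤ r0 φ ∧ r0 φ ≤ C0 * Real.sin φ)
    (α β : ℝ) (hα : 0 ≤ α) (hαβ : α < β) (hβ : β ≤ 1) :
    ∃ C > 0, ∀ n : ℕ, 1 ≤ n → ∀ φ ∈ Set.Ioo (0:ℝ) π, ∀ ϕ ∈ Set.Ioo (0:ℝ) π, φ ≠ ϕ →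
      |Hker r0 n φ ϕ| ≤
        C * (n : ℝ) ^ (-α) * Real.sin ϕ * r0 ϕ ^ (1 / 2 : ℝ) * r0 φ ^ (-(3 / 2) : ℝ) *
          |φ - ϕ| ^ (-β) := by
  refine ⟨beta (1 / 2) ((β - α) / 2) / (2 * π) * (π * C0 / 2) ^ β,
    mul_pos (div_pos (beta_pos (by norm_num) (by linarith)) (by positivity)) (by positivity), ?_⟩
  intro n hn φ hφ ϕ hϕ hne
  have hsinφ := sin_pos_of_pos_of_lt_pi hφ.1 hφ.2
  have hsinϕ := sin_pos_of_pos_of_lt_pi hϕ.1 hϕ.2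
  obtain ⟨hlowφ, hupφ⟩ := hH2 φ (Ioo_subset_Icc_self hφ)
  obtain ⟨hlowϕ, hupϕ⟩ := hH2 ϕ (Ioo_subset_Icc_self hϕ)
  have hrφ : 0 < r0 φ := lt_of_lt_of_le (by positivity) hlowφ
  have hrϕ : 0 < r0 ϕ := lt_of_lt_of_le (by positivity) hlowϕ
  have hcos : cos φ ≠ cos ϕ := fun h =>
    hne (injOn_cos (Ioo_subset_Icc_self hφ) (Ioo_subset_Icc_self hϕ) h)
  have hdist : 0 < |φ - ϕ| := abs_pos.2 (sub_ne_zero.2 hne)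
  have hLβ : (|φ - ϕ| / (π * C0 / 2)) ^ (-β) = (π * C0 / 2) ^ β * |φ - ϕ| ^ (-β) := by
    rw [div_rpow hdist.le (by positivity), rpow_neg (by positivity : (0:ℝ) ≤ π * C0 / 2),
      div_inv_eq_mul, mul_comm]
  calc |Hker r0 n φ ϕ|
      ≤ beta (1 / 2) ((β - α) / 2) / (2 * π) * (n : ℝ) ^ (-α) * sin ϕ *
          r0 ϕ ^ (1 / 2 : ℝ) * r0 φ ^ (-(3 / 2) : ℝ) * (|φ - ϕ| / (π * C0 / 2)) ^ (-β) :=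
        abs_Hker_le_rpow hn hrφ hrϕ hcos hsinϕ hα hαβ hβ (by positivity)
          (mul_sq_le_Rker_mul_Sker_sq hC0 hφ hϕ hrφ hrϕ hupφ hupϕ)
    _ = _ := by rw [hLβ]; ring
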